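/- arXiv:0705.1911 — 2 statements merged into one kernel-verified Lean document; each statement's English description precedes it below -/
import Mathlib

section
/- Let M : l²(ℤ) → l²(ℤ) be a bounded linear operator given by a bi-infinite matrix (m_{j'j})_{j',j∈ℤ}, i.e. (Mx)_{j'} = Σ_j m_{j'j} x_j. Let δ > 0 and let w : [0,∞) → [0,∞) satisfy w(x) = o(x^{−1−δ}) as x → ∞. If there exists λ > 1 such that |m_{j'j}| < w(λ|j'| − |j|) for all j', j ∈ ℤ with λ|j'| − |j| > 0, then M has no bounded left inverse, i.e. there is no bounded linear operator L : l²(ℤ) → l²(ℤ) with L∘M = Id. -/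
/-!
If `L ∘ M = id`, then `‖x‖ ≤ ‖L‖ ‖M x‖`, so it suffices to find nonzero `x` with `‖M x‖ / ‖x‖`
arbitrarily small. Vectors supported on `[-N, N]` form a space of dimension `2N + 1`, while the
vanishing of `M x` on `(-N, N)` imposes only `2N - 1` linear conditions, so such a nonzero `x`
exists. The remaining coordinates of `M x` sit at `|j'| ≥ N`, where each entry `m j' j` with
`|j| ≤ N` is bounded by `w` at an argument `≥ (λ - 1) |j'|`. By Cauchy–Schwarz,
`|(M x) j'|² ≤ ε |j'| ^ (-1 - 2δ) ‖x‖²` for any prescribed `ε` once `N` is large, and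
`∑ |j'| ^ (-1 - 2δ)` converges.
-/

open Filter Asymptotics Finset
open scoped ENNReal

theorem not_exists_comp_eq_id_of_forall_exists_norm_le {𝕜 E F : Type*} [NontriviallyNormedField 𝕜]
    [NormedAddCommGroup E] [NormedSpace 𝕜 E] [NormedAddCommGroup F] [NormedSpace 𝕜 F]
    (M : E →L[𝕜] F) (h : ∀ κ > 0, ∃ x ≠ 0, ‖M x‖ ≤ κ * ‖x‖) :
    ¬ ∃ L : F →L[𝕜] E, L.comp M = ContinuousLinearMap.id 𝕜 E := by
  rintro ⟨L, hL⟩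
  obtain ⟨x, hx0, hx⟩ := h (‖L‖ + 1)⁻¹ (by positivity)
  have hxpos : 0 < ‖x‖ := norm_pos_iff.2 hx0
  have hLM : ‖x‖ ≤ ‖L‖ * ‖M x‖ := by
    simpa [← ContinuousLinearMap.comp_apply, hL] using L.le_opNorm (M x)
  have hlt : ‖L‖ * (‖L‖ + 1)⁻¹ < 1 := by
    rw [mul_inv_lt_iff₀ (by positivity)]; linarith
  nlinarith [hLM.trans (mul_le_mul_of_nonneg_left hx (norm_nonneg L))]

theorem norm_sum_mul_sq_le {ι R : Type*} [SeminormedRing R] (s : Finset ι) (f g : ι → R) :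
    ‖∑ i ∈ s, f i * g i‖ ^ 2 ≤ (∑ i ∈ s, ‖f i‖ ^ 2) * ∑ i ∈ s, ‖g i‖ ^ 2 :=
  calc ‖∑ i ∈ s, f i * g i‖ ^ 2 ≤ (∑ i ∈ s, ‖f i‖ * ‖g i‖) ^ 2 := by
        gcongr; exact (norm_sum_le _ _).trans (sum_le_sum fun i _ => norm_mul_le _ _)
    _ ≤ _ := sum_mul_sq_le_sq_mul_sq s _ _

theorem memℓp_of_forall_notMem_eq_zero {ι : Type*} {E : ι → Type*} [∀ i, NormedAddCommGroup (E i)]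
    {f : ∀ i, E i} (s : Finset ι) (hf : ∀ i ∉ s, f i = 0) (p : ℝ≥0∞) : Memℓp f p :=
  (memℓp_zero (s.finite_toSet.subset fun i hi => not_imp_comm.1 (hf i) hi)).of_exponent_ge zero_le

namespace lp

variable {ι : Type*} {E : ι → Type*} [∀ i, NormedAddCommGroup (E i)]

theorem sum_norm_sq_le_norm_sq (f : lp E 2) (s : Finset ι) : ∑ i ∈ s, ‖f i‖ ^ 2 ≤ ‖f‖ ^ 2 := by
  simpa using sum_rpow_le_norm_rpow (by norm_num) f s

theorem norm_le_of_forall_sum_norm_sq_le {f : lp E 2} {C : ℝ} (hC : 0 ≤ C)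
    (h : ∀ s : Finset ι, ∑ i ∈ s, ‖f i‖ ^ 2 ≤ C ^ 2) : ‖f‖ ≤ C :=
  norm_le_of_forall_sum_le (by norm_num) hC (by simpa using h)

end lp

theorem exists_ne_zero_forall_sum_mul_eq_zero {K ι κ : Type*} [Field K] (m : κ → ι → K)
    {A : Finset ι} {B : Finset κ} (hAB : #B < #A) :
    ∃ a : ι → K, a ≠ 0 ∧ (∀ j ∉ A, a j = 0) ∧ ∀ j' ∈ B, ∑ j ∈ A, m j' j * a j = 0 := by
  classical
  let f : (A → K) →ₗ[K] (B → K) := Matrix.mulVecLin (Matrix.of fun j' j => m j' j)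
  have hker : LinearMap.ker f ≠ ⊥ :=
    LinearMap.ker_ne_bot_of_finrank_lt (by simpa [Module.finrank_fintype_fun_eq_card] using hAB)
  obtain ⟨v, hv, hv0⟩ := (Submodule.ne_bot_iff _).1 hker
  obtain ⟨i, hi⟩ := Function.ne_iff.1 hv0
  refine ⟨fun j => if h : j ∈ A then v ⟨j, h⟩ else 0, Function.ne_iff.2 ⟨i, by simpa using hi⟩,
    fun j hj => dif_neg hj, fun j' hj' => ?_⟩
  have hfv : Matrix.mulVec (Matrix.of fun (j' : B) (j : A) => m j' j) v = 0 :=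
    LinearMap.mem_ker.1 hv
  rw [← sum_coe_sort A]
  simpa [Matrix.mulVec, dotProduct] using congrFun hfv ⟨j', hj'⟩

theorem exists_ne_zero_apply_eq_zero_of_card_lt {𝕜 ι : Type*} [NormedField 𝕜] (m : ι → ι → 𝕜)
    (M : lp (fun _ : ι => 𝕜) 2 → lp (fun _ : ι => 𝕜) 2)
    (hM : ∀ x : lp (fun _ : ι => 𝕜) 2, ∀ j', M x j' = ∑' j, m j' j * x j)
    {A B : Finset ι} (hAB : #B < #A) :
    ∃ x : lp (fun _ : ι => 𝕜) 2, x ≠ 0 ∧ (∀ j', M x j' = ∑ j ∈ A, m j' j * x j) ∧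
      ∀ j' ∈ B, M x j' = 0 := by
  obtain ⟨a, ha0, haA, haB⟩ := exists_ne_zero_forall_sum_mul_eq_zero m hAB
  let x : lp (fun _ : ι => 𝕜) 2 := ⟨a, memℓp_of_forall_notMem_eq_zero A haA 2⟩
  have hMx : ∀ j', M x j' = ∑ j ∈ A, m j' j * x j := fun j' => by
    rw [hM]; exact tsum_eq_sum fun j hj => by simp [x, haA j hj]
  exact ⟨x, fun hx => ha0 (congrArg (⇑) hx), hMx, fun j' hj' => (hMx j').trans (haB j' hj')⟩

theorem isLittleO_rpow_of_tendsto_div_rpow {w : ℝ → ℝ} {r : ℝ}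
    (h : Tendsto (fun x => w x / x ^ r) atTop (nhds 0)) : w =o[atTop] fun x => x ^ r :=
  (isLittleO_iff_tendsto' ((eventually_gt_atTop 0).mono fun _ hx h0 =>
    absurd h0 (Real.rpow_pos_of_pos hx r).ne')).2 h

theorem exists_sum_norm_sq_le_of_slanted_decay {E : Type*} [SeminormedAddCommGroup E]
    {m : ℤ → ℤ → E} {w : ℝ → ℝ} {r lam ε : ℝ} (hr : r ≤ 0)
    (hw : w =o[atTop] fun t => t ^ r) (hlam : 1 < lam)
    (hm : ∀ j' j : ℤ, 0 < lam * |(j' : ℝ)| - |(j : ℝ)| →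
      ‖m j' j‖ < w (lam * |(j' : ℝ)| - |(j : ℝ)|)) (hε : 0 < ε) :
    ∃ N : ℕ, ∀ j' : ℤ, (N : ℝ) ≤ |(j' : ℝ)| →
      ∑ j ∈ Icc (-(N : ℤ)) N, ‖m j' j‖ ^ 2 ≤ ε * |(j' : ℝ)| ^ (1 + 2 * r) := by
  set c := lam - 1
  have hc : 0 < c := by linarith
  have hC : 0 < c ^ (2 * r) := Real.rpow_pos_of_pos hc _
  set η := ε / (3 * c ^ (2 * r)) with hη
  obtain ⟨X, hX⟩ := eventually_atTop.1 ((hw.pow two_pos).def (c := η) (by positivity))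
  obtain ⟨N, hN⟩ := exists_nat_ge (max (X / c) 1)
  have hXN : X ≤ c * N := (div_le_iff₀' hc).1 ((le_max_left _ _).trans hN)
  have hN1 : (1 : ℝ) ≤ N := (le_max_right _ _).trans hN
  refine ⟨N, fun j' hj' => ?_⟩
  have hj'pos : 0 < |(j' : ℝ)| := by linarith
  have hentry : ∀ j ∈ Icc (-(N : ℤ)) N,
      ‖m j' j‖ ^ 2 ≤ η * (c * |(j' : ℝ)|) ^ (2 * r) := by
    intro j hj
    have hjN : |(j : ℝ)| ≤ N := by exact_mod_cast abs_le.2 (mem_Icc.1 hj)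
    set t := lam * |(j' : ℝ)| - |(j : ℝ)|
    have hct : c * |(j' : ℝ)| ≤ t := by simp only [t, c]; linarith
    have hcNt : c * N ≤ t := hct.trans' (by gcongr)
    have ht : 0 < t := hct.trans_lt' (by positivity)
    calc ‖m j' j‖ ^ 2 ≤ w t ^ 2 := pow_le_pow_left₀ (norm_nonneg _) (hm j' j ht).le 2
      _ ≤ ‖w t ^ 2‖ := Real.le_norm_self _
      _ ≤ η * ‖(t ^ r) ^ 2‖ := hX t (hXN.trans hcNt)
      _ = η * t ^ (2 * r) := by
        rw [norm_pow, Real.norm_of_nonneg (Real.rpow_nonneg ht.le r),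
          ← Real.rpow_mul_natCast ht.le, mul_comm r]; norm_num
      _ ≤ η * (c * |(j' : ℝ)|) ^ (2 * r) :=
        mul_le_mul_of_nonneg_left (Real.rpow_le_rpow_of_nonpos (by positivity) hct (by linarith))
          (by positivity)
  have hcard : (#(Icc (-(N : ℤ)) N) : ℝ) ≤ 3 * |(j' : ℝ)| := by
    rw [Int.card_Icc, show (N : ℤ) + 1 - -N = (2 * N + 1 : ℕ) by push_cast; ring, Int.toNat_natCast]
    push_cast; linarith
  calc ∑ j ∈ Icc (-(N : ℤ)) N, ‖m j' j‖ ^ 2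
      ≤ #(Icc (-(N : ℤ)) N) * (η * (c * |(j' : ℝ)|) ^ (2 * r)) := by
        simpa using sum_le_card_nsmul _ _ _ hentry
    _ ≤ 3 * |(j' : ℝ)| * (η * (c * |(j' : ℝ)|) ^ (2 * r)) := by gcongr
    _ = ε * |(j' : ℝ)| ^ (1 + 2 * r) := by
      rw [Real.mul_rpow hc.le hj'pos.le, Real.rpow_add hj'pos, Real.rpow_one, hη]
      field_simp

theorem exists_norm_apply_le_of_slanted_decay {𝕜 : Type*} [NormedField 𝕜] (m : ℤ → ℤ → 𝕜)
    (M : lp (fun _ : ℤ => 𝕜) 2 → lp (fun _ : ℤ => 𝕜) 2)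
    (hM : ∀ x : lp (fun _ : ℤ => 𝕜) 2, ∀ j', M x j' = ∑' j, m j' j * x j)
    {w : ℝ → ℝ} {r lam : ℝ} (hr : r < -1) (hw : w =o[atTop] fun t => t ^ r) (hlam : 1 < lam)
    (hm : ∀ j' j : ℤ, 0 < lam * |(j' : ℝ)| - |(j : ℝ)| →
      ‖m j' j‖ < w (lam * |(j' : ℝ)| - |(j : ℝ)|)) {κ : ℝ} (hκ : 0 < κ) :
    ∃ x ≠ 0, ‖M x‖ ≤ κ * ‖x‖ := by
  have hg : Summable fun j : ℤ => |(j : ℝ)| ^ (1 + 2 * r) := by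
    simpa using Real.summable_abs_int_rpow (b := -(1 + 2 * r)) (by linarith)
  set S := ∑' j : ℤ, |(j : ℝ)| ^ (1 + 2 * r)
  have hS : 0 ≤ S := tsum_nonneg fun _ => by positivity
  set ε := κ ^ 2 / (S + 1)
  obtain ⟨N, hN⟩ := exists_sum_norm_sq_le_of_slanted_decay (m := m) (ε := ε) (by linarith) hw
    hlam hm (by positivity)
  obtain ⟨x, hx0, hMx, hMxB⟩ := exists_ne_zero_apply_eq_zero_of_card_lt m M hM
    (A := Icc (-(N : ℤ)) N) (B := Ioo (-(N : ℤ)) N) (by simp [Int.card_Icc, Int.card_Ioo]; omega)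
  have hcoord : ∀ j', ‖M x j'‖ ^ 2 ≤ ε * |(j' : ℝ)| ^ (1 + 2 * r) * ‖x‖ ^ 2 := by
    intro j'
    by_cases hj' : j' ∈ Ioo (-(N : ℤ)) N
    · rw [hMxB j' hj', norm_zero, zero_pow two_ne_zero]; positivity
    have hNj' : (N : ℤ) ≤ |j'| :=
      le_abs'.2 (by simp only [mem_Ioo, not_and_or, not_lt] at hj'; omega)
    rw [hMx]
    exact (norm_sum_mul_sq_le _ _ _).trans (mul_le_mul (hN j' (by exact_mod_cast hNj'))
      (lp.sum_norm_sq_le_norm_sq x _) (sum_nonneg fun _ _ => by positivity) (by positivity))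
  refine ⟨x, hx0, lp.norm_le_of_forall_sum_norm_sq_le (by positivity) fun s => ?_⟩
  calc ∑ j' ∈ s, ‖M x j'‖ ^ 2 ≤ ∑ j' ∈ s, ε * |(j' : ℝ)| ^ (1 + 2 * r) * ‖x‖ ^ 2 :=
        sum_le_sum fun j' _ => hcoord j'
    _ = ε * (∑ j' ∈ s, |(j' : ℝ)| ^ (1 + 2 * r)) * ‖x‖ ^ 2 := by rw [mul_sum, sum_mul]
    _ ≤ ε * S * ‖x‖ ^ 2 := by
        gcongr
        exact hg.sum_le_tsum s fun _ _ => by positivity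
    _ ≤ (κ * ‖x‖) ^ 2 := by
        rw [mul_pow]
        gcongr
        rw [div_mul_eq_mul_div, div_le_iff₀ (by positivity)]
        nlinarith [sq_nonneg κ]

theorem no_bounded_left_inverse_of_slanted_decay_l2_int_general
    (m : ℤ → ℤ → ℂ)
    (M : lp (fun _ : ℤ => ℂ) 2 →L[ℂ] lp (fun _ : ℤ => ℂ) 2)
    (hM : ∀ x : lp (fun _ : ℤ => ℂ) 2, ∀ j' : ℤ, M x j' = ∑' j : ℤ, m j' j * x j)
    (δ : ℝ) (hδ : 0 < δ)
    (w : ℝ → ℝ)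
    (hw : Tendsto (fun x : ℝ => w x / x ^ (-1 - δ)) atTop (nhds 0))
    (lam : ℝ) (hlam : 1 < lam)
    (hm : ∀ j' j : ℤ, 0 < lam * |(j' : ℝ)| - |(j : ℝ)| →
      ‖m j' j‖ < w (lam * |(j' : ℝ)| - |(j : ℝ)|)) :
    ¬ ∃ L : lp (fun _ : ℤ => ℂ) 2 →L[ℂ] lp (fun _ : ℤ => ℂ) 2,
      L.comp M = ContinuousLinearMap.id ℂ (lp (fun _ : ℤ => ℂ) 2) :=
  not_exists_comp_eq_id_of_forall_exists_norm_le M fun _ hκ =>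
    exists_norm_apply_le_of_slanted_decay m M hM (by linarith)
      (isLittleO_rpow_of_tendsto_div_rpow hw) hlam hm hκ

/-- A bounded operator on `l²(ℤ)` given by a bi-infinite matrix whose
entries decay like `w(λ|j'| - |j|)` below the slanted diagonal `λ|j'| = |j|` (with slope
`λ > 1` and `w(x) = o(x^{-1-δ})`) has no bounded left inverse. -/
theorem no_bounded_left_inverse_of_slanted_decay_l2_int
    (m : ℤ → ℤ → ℂ)
    (M : lp (fun _ : ℤ => ℂ) 2 →L[ℂ] lp (fun _ : ℤ => ℂ) 2)
    (hM : ∀ x : lp (fun _ : ℤ => ℂ) 2, ∀ j' : ℤ, M x j' = ∑' j : ℤ, m j' j * x j)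
    (δ : ℝ) (hδ : 0 < δ)
    (w : ℝ → ℝ) (hw0 : ∀ x : ℝ, 0 ≤ x → 0 ≤ w x)
    (hw : Tendsto (fun x : ℝ => w x / x ^ (-1 - δ)) atTop (nhds 0))
    (lam : ℝ) (hlam : 1 < lam)
    (hm : ∀ j' j : ℤ, 0 < lam * |(j' : ℝ)| - |(j : ℝ)| →
      ‖m j' j‖ < w (lam * |(j' : ℝ)| - |(j : ℝ)|)) :
    ¬ ∃ L : lp (fun _ : ℤ => ℂ) 2 →L[ℂ] lp (fun _ : ℤ => ℂ) 2,
      L.comp M = ContinuousLinearMap.id ℂ (lp (fun _ : ℤ => ℂ) 2) :=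
  no_bounded_left_inverse_of_slanted_decay_l2_int_general m M hM δ hδ w hw lam hlam hm
end

section
/- Let d ≥ 1, δ > 0, and let M : l²(ℤ^d) → l²(ℤ^d) be a bounded linear operator given by a bi-infinite matrix (m_{j'j})_{j',j∈ℤ^d}. Let w : [0,∞) → [0,∞) be nonincreasing with w(x) = o(x^{−d−δ}) as x → ∞. If there exists λ > 1 such that |m_{j'j}| ≤ w(‖λj' − j‖_∞) for all j', j ∈ ℤ^d, then M has no bounded left inverse. (Here λj' − j ∈ ℝ^d and ‖·‖_∞ is the maximum norm.) -/
/-!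
If `L M = 1`, then `‖x‖ ≤ ‖L‖ ‖M x‖` for every `x ∈ ℓ²(ℤ^d)`. The cube `Q_{n+1} = [-n-1, n+1]^d`
has more lattice points than `Q_n`, so a dimension count yields `x ≠ 0` supported in `Q_{n+1}`
with `M x = 0` on `Q_n`. Off `Q_n` we have `‖j'‖ ≥ n+1 ≥ ‖j‖` for every `j ∈ Q_{n+1}`, hence
`‖λj' - j‖ ≥ (λ-1)‖j'‖` and, by Cauchy–Schwarz, `|(M x)_{j'}|² ≤ |Q_{n+1}| ‖x‖² w((λ-1)‖j'‖)²`.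
As `w(r)² = o(r^{-2d-2δ})` and `|Q_{n+1}| ≤ 3^d (n+1)^d`, for large `n` this is at most
`ε 3^d ‖x‖² ‖j'‖^{-d-2δ}`, which is summable over `ℤ^d` with sum `ε 3^d C ‖x‖²`. Thus
`‖x‖² ≤ ε ‖L‖² 3^d C ‖x‖²`, which is absurd once `ε` is small.
-/

open Filter Asymptotics Finset

theorem sub_one_mul_norm_le_norm_smul_sub {E : Type*} [SeminormedAddCommGroup E]
    [NormedSpace ℝ E] {c : ℝ} (hc : 0 ≤ c) {x y : E} (h : ‖y‖ ≤ ‖x‖) :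
    (c - 1) * ‖x‖ ≤ ‖c • x - y‖ := by
  have := norm_sub_norm_le (c • x) y
  rw [norm_smul, Real.norm_of_nonneg hc] at this
  linarith

theorem eventually_sq_comp_mul_le_rpow {w : ℝ → ℝ} {a : ℝ}
    (hw : Tendsto (fun x => w x / x ^ a) atTop (nhds 0)) {c : ℝ} (hc : 0 < c) {ε : ℝ}
    (hε : 0 < ε) : ∀ᶠ r in atTop, w (c * r) ^ 2 ≤ ε * r ^ (2 * a) := by
  have hwo : w =o[atTop] fun x => x ^ a :=
    (isLittleO_iff_tendsto' ((eventually_gt_atTop 0).mono fun x hx h =>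
      absurd h (Real.rpow_pos_of_pos hx a).ne')).2 hw
  have hscale : (fun r => (c * r) ^ a) =O[atTop] fun r => r ^ a :=
    (isBigO_const_mul_self (c ^ a) _ _).congr' ((eventually_ge_atTop 0).mono fun r hr =>
      (Real.mul_rpow hc.le hr).symm) EventuallyEq.rfl
  have := (((hwo.comp_tendsto (tendsto_id.const_mul_atTop hc)).trans_isBigO hscale).pow
    two_pos).bound hε
  filter_upwards [this, eventually_gt_atTop 0] with r hr hr0
  simp only [Function.comp_apply, id, norm_pow, Real.norm_eq_abs, sq_abs] at hr
  rwa [mul_comm 2 a, Real.rpow_mul hr0.le, Real.rpow_two]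

theorem rpow_two_mul_neg_sub_le {N r : ℝ} (hN : 0 < N) (hr : N ≤ r) (d : ℕ) (δ : ℝ) :
    r ^ (2 * (-(d : ℝ) - δ)) ≤ (N ^ d)⁻¹ * r ^ (-(d + 2 * δ)) := by
  have hr0 : 0 < r := hN.trans_le hr
  rw [show 2 * (-(d : ℝ) - δ) = -d + -(d + 2 * δ) by ring, Real.rpow_add hr0,
    Real.rpow_neg hr0.le, Real.rpow_natCast]
  gcongr

theorem two_mul_add_three_pow_mul_inv_pow_le (n d : ℕ) :
    ((2 * (n + 1) + 1 : ℕ) : ℝ) ^ d * ((n + 1 : ℝ) ^ d)⁻¹ ≤ 3 ^ d := by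
  rw [← inv_pow, ← mul_pow, ← div_eq_mul_inv]
  gcongr
  rw [div_le_iff₀ (by positivity)]
  push_cast
  linarith

section Sequences

variable {α : Type*}

theorem exists_ne_zero_supported_apply_eq_zero {𝕜 : Type*} [NormedField 𝕜] {p : ENNReal}
    (M : lp (fun _ : α => 𝕜) p →ₗ[𝕜] lp (fun _ : α => 𝕜) p) {S T : Finset α}
    (hST : #T < #S) :
    ∃ x : lp (fun _ : α => 𝕜) p, x ≠ 0 ∧ (∀ j ∉ S, x j = 0) ∧ ∀ j ∈ T, M x j = 0 := by
  classical
  let extend (a : S → 𝕜) : α → 𝕜 := fun k => if h : k ∈ S then a ⟨k, h⟩ else 0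
  have extend_mem (a : S → 𝕜) : Memℓp (extend a) p :=
    (memℓp_zero (S.finite_toSet.subset fun k hk => by_contra fun h => hk (dif_neg h)))
      |>.of_exponent_ge zero_le
  let E : (S → 𝕜) →ₗ[𝕜] lp (fun _ : α => 𝕜) p :=
    { toFun a := ⟨extend a, extend_mem a⟩
      map_add' a b := by
        ext k; simp only [lp.coeFn_add, Pi.add_apply, extend]; split_ifs <;> simp
      map_smul' c a := by
        ext k; simp only [lp.coeFn_smul, Pi.smul_apply, extend]; split_ifs <;> simp }
  let R : lp (fun _ : α => 𝕜) p →ₗ[𝕜] (T → 𝕜) := LinearMap.pi fun j => lp.evalₗ _ p (j : α)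
  obtain ⟨a, ha, ha0⟩ := (Submodule.ne_bot_iff _).mp
    (LinearMap.ker_ne_bot_of_finrank_lt (f := R ∘ₗ M ∘ₗ E) (by simpa using hST))
  refine ⟨E a, fun h => ha0 ?_, fun j hj => by simp [E, extend, hj], fun j hj => ?_⟩
  · ext ⟨k, hk⟩
    simpa [E, extend, hk] using congr($h k)
  · exact congr_fun (LinearMap.mem_ker.mp ha) ⟨j, hj⟩

variable {𝕜 : Type*} [NontriviallyNormedField 𝕜]

theorem summable_norm_sq (x : lp (fun _ : α => 𝕜) 2) : Summable fun j => ‖x j‖ ^ 2 := by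
  simpa using (lp.memℓp x).summable (p := 2) (by norm_num)

theorem norm_sq_eq_tsum (x : lp (fun _ : α => 𝕜) 2) : ‖x‖ ^ 2 = ∑' j, ‖x j‖ ^ 2 := by
  simpa using lp.norm_rpow_eq_tsum (p := 2) (by norm_num) x

theorem norm_sum_mul_sq_le_s8 (c : α → 𝕜) (x : lp (fun _ : α => 𝕜) 2) (S : Finset α) :
    ‖∑ j ∈ S, c j * x j‖ ^ 2 ≤ (∑ j ∈ S, ‖c j‖ ^ 2) * ‖x‖ ^ 2 := by
  have hx : ∑ j ∈ S, ‖x j‖ ^ 2 ≤ ‖x‖ ^ 2 := by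
    simpa using lp.sum_rpow_le_norm_rpow (p := 2) (by norm_num) x S
  calc ‖∑ j ∈ S, c j * x j‖ ^ 2 ≤ (∑ j ∈ S, ‖c j‖ * ‖x j‖) ^ 2 := by
        gcongr
        exact (norm_sum_le _ _).trans_eq (by simp only [norm_mul])
    _ ≤ (∑ j ∈ S, ‖c j‖ ^ 2) * ∑ j ∈ S, ‖x j‖ ^ 2 := sum_mul_sq_le_sq_mul_sq _ _ _
    _ ≤ (∑ j ∈ S, ‖c j‖ ^ 2) * ‖x‖ ^ 2 := by gcongr

theorem one_le_norm_sq_mul_card_mul_tsum_of_comp_eq_id {m : α → α → 𝕜}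
    {M : lp (fun _ : α => 𝕜) 2 →L[𝕜] lp (fun _ : α => 𝕜) 2}
    (hM : ∀ x : lp (fun _ : α => 𝕜) 2, ∀ j', M x j' = ∑' j, m j' j * x j)
    {L : lp (fun _ : α => 𝕜) 2 →L[𝕜] lp (fun _ : α => 𝕜) 2}
    (hL : L.comp M = ContinuousLinearMap.id 𝕜 _) {S T : Finset α} (hST : #T < #S)
    {g : α → ℝ} (hg0 : ∀ j, 0 ≤ g j) (hg : Summable g)
    (hmg : ∀ j' ∉ T, ∀ j ∈ S, ‖m j' j‖ ^ 2 ≤ g j') :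
    1 ≤ ‖L‖ ^ 2 * #S * ∑' j, g j := by
  obtain ⟨x, hx0, hxS, hxT⟩ :=
    exists_ne_zero_supported_apply_eq_zero (M : lp (fun _ : α => 𝕜) 2 →ₗ[𝕜] _) hST
  simp only [ContinuousLinearMap.coe_coe] at hxT
  have hMx : ∀ j', ‖M x j'‖ ^ 2 ≤ #S * ‖x‖ ^ 2 * g j' := by
    intro j'
    by_cases hj' : j' ∈ T
    · rw [hxT j' hj', norm_zero, zero_pow two_ne_zero]
      exact mul_nonneg (by positivity) (hg0 j')
    rw [hM, tsum_eq_sum fun j hj => by rw [hxS j hj, mul_zero]]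
    calc _ ≤ (∑ j ∈ S, ‖m j' j‖ ^ 2) * ‖x‖ ^ 2 := norm_sum_mul_sq_le_s8 _ x S
      _ ≤ (∑ _j ∈ S, g j') * ‖x‖ ^ 2 := by gcongr with j hj; exact hmg j' hj' j hj
      _ = #S * ‖x‖ ^ 2 * g j' := by rw [sum_const, nsmul_eq_mul]; ring
  have hMx_norm : ‖M x‖ ^ 2 ≤ #S * ‖x‖ ^ 2 * ∑' j, g j := by
    rw [norm_sq_eq_tsum, ← tsum_mul_left]
    exact (summable_norm_sq _).tsum_le_tsum hMx (hg.mul_left _)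
  have hx_le : ‖x‖ ≤ ‖L‖ * ‖M x‖ := by
    simpa [← ContinuousLinearMap.comp_apply, hL] using L.le_opNorm (M x)
  refine le_of_mul_le_mul_right ?_ (by positivity : 0 < ‖x‖ ^ 2)
  calc 1 * ‖x‖ ^ 2 = ‖x‖ ^ 2 := one_mul _
    _ ≤ ‖L‖ ^ 2 * ‖M x‖ ^ 2 := by rw [← mul_pow]; gcongr
    _ ≤ ‖L‖ ^ 2 * (#S * ‖x‖ ^ 2 * ∑' j, g j) := by gcongr
    _ = ‖L‖ ^ 2 * #S * (∑' j, g j) * ‖x‖ ^ 2 := by ring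

end Sequences

section Lattice

variable {ι : Type*} [Fintype ι] [DecidableEq ι]

theorem card_Icc_neg_natCast (n : ℕ) :
    #(Icc (-(n : ι → ℤ)) n) = (2 * n + 1) ^ Fintype.card ι := by
  rw [Pi.card_Icc]
  simp only [Pi.neg_apply, Pi.natCast_apply, Int.card_Icc, prod_const, card_univ]
  congr 1
  omega

theorem norm_intCast_le_of_mem_Icc {n : ℕ} {j : ι → ℤ} (hj : j ∈ Icc (-(n : ι → ℤ)) n) :
    ‖fun i => (j i : ℝ)‖ ≤ n := by
  refine (pi_norm_le_iff_of_nonneg (Nat.cast_nonneg n)).2 fun i => ?_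
  rw [mem_Icc] at hj
  have := abs_le.2 ⟨hj.1 i, hj.2 i⟩
  simp only [Real.norm_eq_abs, ← Int.cast_abs]
  exact_mod_cast this

theorem le_norm_intCast_of_notMem_Icc {n : ℕ} {j : ι → ℤ} (hj : j ∉ Icc (-(n : ι → ℤ)) n) :
    n + 1 ≤ ‖fun i => (j i : ℝ)‖ := by
  obtain ⟨i, hi⟩ : ∃ i, (n : ℤ) < |j i| := by
    by_contra! h
    exact hj (mem_Icc.2 ⟨fun i => (abs_le.1 (h i)).1, fun i => (abs_le.1 (h i)).2⟩)
  calc (n : ℝ) + 1 ≤ |(j i : ℝ)| := by rw [← Int.cast_abs]; exact_mod_cast hi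
    _ = ‖(j i : ℝ)‖ := (Real.norm_eq_abs _).symm
    _ ≤ _ := norm_le_pi_norm (fun i => (j i : ℝ)) i

theorem summable_norm_intCast_rpow {t : ℝ} (ht : (Fintype.card ι : ℝ) < t) :
    Summable fun j : ι → ℤ => ‖fun i => (j i : ℝ)‖ ^ (-t) := by
  let b := (Pi.basisFun ℝ ι).restrictScalars ℤ
  have hrank : Module.finrank ℤ (Submodule.span ℤ (Set.range (Pi.basisFun ℝ ι))) =
      Fintype.card ι :=
    Module.finrank_eq_card_basis b
  have := ZLattice.summable_norm_rpow _ (-t) (by rw [hrank]; linarith)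
  refine (b.equivFun.symm.toEquiv.summable_iff.2 this).congr fun j => ?_
  have : ((b.equivFun.symm j : Submodule.span ℤ _) : ι → ℝ) = fun i => (j i : ℝ) := by
    ext i
    simp [b, Module.Basis.equivFun_symm_apply, Pi.basisFun_apply, Pi.single_apply]
  simp only [Function.comp_apply, LinearEquiv.coe_toEquiv, ← this]
  rfl

variable {E : Type*} [SeminormedAddGroup E] {m : (ι → ℤ) → (ι → ℤ) → E} {w : ℝ → ℝ}
  {lam : ℝ}

theorem norm_entry_sq_le_of_notMem_Icc (hmono : AntitoneOn w (Set.Ici 0)) (hlam : 1 ≤ lam)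
    (hm : ∀ j' j : ι → ℤ, ‖m j' j‖ ≤ w ‖fun i => lam * (j' i : ℝ) - (j i : ℝ)‖)
    {n : ℕ} {j' j : ι → ℤ} (hj' : j' ∉ Icc (-(n : ι → ℤ)) n)
    (hj : j ∈ Icc (-((n + 1 : ℕ) : ι → ℤ)) (n + 1 : ℕ)) :
    ‖m j' j‖ ^ 2 ≤ w ((lam - 1) * ‖fun i => (j' i : ℝ)‖) ^ 2 := by
  have hnorm : ‖fun i => (j i : ℝ)‖ ≤ ‖fun i => (j' i : ℝ)‖ :=
    (norm_intCast_le_of_mem_Icc hj).trans (by exact_mod_cast le_norm_intCast_of_notMem_Icc hj')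
  have hslant := sub_one_mul_norm_le_norm_smul_sub (c := lam) (by linarith) hnorm
  have hpos : 0 ≤ (lam - 1) * ‖fun i => (j' i : ℝ)‖ :=
    mul_nonneg (by linarith) (norm_nonneg _)
  exact pow_le_pow_left₀ (norm_nonneg _)
    ((hm j' j).trans (hmono hpos (norm_nonneg _) hslant)) 2

theorem exists_norm_entry_sq_le_inv_pow_mul_rpow (hmono : AntitoneOn w (Set.Ici 0))
    (hlam : 1 < lam) (hm : ∀ j' j : ι → ℤ, ‖m j' j‖ ≤ w ‖fun i => lam * (j' i : ℝ) - (j i : ℝ)‖)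
    {d : ℕ} {δ : ℝ} (hw : Tendsto (fun x : ℝ => w x / x ^ (-(d : ℝ) - δ)) atTop (nhds 0))
    {ε : ℝ} (hε : 0 < ε) :
    ∃ n : ℕ, ∀ j' ∉ Icc (-(n : ι → ℤ)) n, ∀ j ∈ Icc (-((n + 1 : ℕ) : ι → ℤ)) (n + 1 : ℕ),
      ‖m j' j‖ ^ 2 ≤ ε * ((n + 1 : ℝ) ^ d)⁻¹ * ‖fun i => (j' i : ℝ)‖ ^ (-(d + 2 * δ)) := by
  obtain ⟨R, hR⟩ := eventually_atTop.1 (eventually_sq_comp_mul_le_rpow hw (sub_pos.2 hlam) hε)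
  refine ⟨⌈R⌉₊, fun j' hj' j hj => ?_⟩
  have hnorm := le_norm_intCast_of_notMem_Icc hj'
  calc ‖m j' j‖ ^ 2 ≤ w ((lam - 1) * ‖fun i => (j' i : ℝ)‖) ^ 2 :=
        norm_entry_sq_le_of_notMem_Icc hmono hlam.le hm hj' hj
    _ ≤ ε * ‖fun i => (j' i : ℝ)‖ ^ (2 * (-(d : ℝ) - δ)) :=
        hR _ (((Nat.le_ceil R).trans (by linarith)).trans hnorm)
    _ ≤ _ := by
        rw [mul_assoc]
        gcongr
        exact rpow_two_mul_neg_sub_le (by positivity) hnorm d δ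

end Lattice

theorem no_bounded_left_inverse_of_slanted_matrix_decay_general
    (d : ℕ) (hd : 1 ≤ d) (δ : ℝ) (hδ : 0 < δ)
    (m : (Fin d → ℤ) → (Fin d → ℤ) → ℂ)
    (M : lp (fun _ : Fin d → ℤ => ℂ) 2 →L[ℂ] lp (fun _ : Fin d → ℤ => ℂ) 2)
    (hM : ∀ x : lp (fun _ : Fin d → ℤ => ℂ) 2, ∀ j' : Fin d → ℤ,
      M x j' = ∑' j : Fin d → ℤ, m j' j * x j)
    (w : ℝ → ℝ)
    (hmono : AntitoneOn w (Set.Ici (0 : ℝ)))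
    (hw : Tendsto (fun x : ℝ => w x / x ^ (-(d : ℝ) - δ)) atTop (nhds 0))
    (lam : ℝ) (hlam : 1 < lam)
    (hm : ∀ j' j : Fin d → ℤ,
      ‖m j' j‖ ≤ w ‖fun i => lam * (j' i : ℝ) - (j i : ℝ)‖) :
    ¬ ∃ L : lp (fun _ : Fin d → ℤ => ℂ) 2 →L[ℂ] lp (fun _ : Fin d → ℤ => ℂ) 2,
      L.comp M = ContinuousLinearMap.id ℂ (lp (fun _ : Fin d → ℤ => ℂ) 2) := by
  rintro ⟨L, hL⟩
  have hS : Summable fun j : Fin d → ℤ => ‖fun i => (j i : ℝ)‖ ^ (-(d + 2 * δ)) :=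
    summable_norm_intCast_rpow (by rw [Fintype.card_fin]; linarith)
  set S := ∑' j : Fin d → ℤ, ‖fun i => (j i : ℝ)‖ ^ (-(d + 2 * δ))
  have hS0 : 0 ≤ S := tsum_nonneg fun _ => by positivity
  set ε := (‖L‖ ^ 2 * 3 ^ d * S + 1)⁻¹
  obtain ⟨n, hn⟩ := exists_norm_entry_sq_le_inv_pow_mul_rpow hmono hlam hm hw
    (ε := ε) (by positivity)
  have hcard : #(Icc (-(n : Fin d → ℤ)) n) < #(Icc (-((n + 1 : ℕ) : Fin d → ℤ)) (n + 1 : ℕ)) := by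
    simp only [card_Icc_neg_natCast, Fintype.card_fin]
    exact Nat.pow_lt_pow_left (by omega) (by omega)
  have key := one_le_norm_sq_mul_card_mul_tsum_of_comp_eq_id hM hL hcard
    (fun _ => by positivity) (hS.mul_left _) hn
  rw [tsum_mul_left, card_Icc_neg_natCast, Fintype.card_fin, Nat.cast_pow] at key
  refine (lt_irrefl (1 : ℝ)) (key.trans_lt ?_)
  calc ‖L‖ ^ 2 * ((2 * (n + 1) + 1 : ℕ) : ℝ) ^ d * (ε * ((n + 1 : ℝ) ^ d)⁻¹ * S)
      = ‖L‖ ^ 2 * (((2 * (n + 1) + 1 : ℕ) : ℝ) ^ d * ((n + 1 : ℝ) ^ d)⁻¹) * S * ε := by ring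
    _ ≤ ‖L‖ ^ 2 * 3 ^ d * S * ε := by gcongr; exact two_mul_add_three_pow_mul_inv_pow_le n d
    _ < 1 := by rw [← div_eq_mul_inv, div_lt_one (by positivity)]; linarith

/-- A bounded operator on `l²(ℤ^d)` given by a bi-infinite matrix whose
entries satisfy `|m_{j'j}| ≤ w(‖λj' - j‖_∞)` for a nonincreasing `w` with
`w(x) = o(x^{-d-δ})` and slope `λ > 1` has no bounded left inverse. -/
theorem no_bounded_left_inverse_of_slanted_matrix_decay
    (d : ℕ) (hd : 1 ≤ d) (δ : ℝ) (hδ : 0 < δ)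
    (m : (Fin d → ℤ) → (Fin d → ℤ) → ℂ)
    (M : lp (fun _ : Fin d → ℤ => ℂ) 2 →L[ℂ] lp (fun _ : Fin d → ℤ => ℂ) 2)
    (hM : ∀ x : lp (fun _ : Fin d → ℤ => ℂ) 2, ∀ j' : Fin d → ℤ,
      M x j' = ∑' j : Fin d → ℤ, m j' j * x j)
    (w : ℝ → ℝ) (hw0 : ∀ x : ℝ, 0 ≤ x → 0 ≤ w x)
    (hmono : AntitoneOn w (Set.Ici (0 : ℝ)))
    (hw : Tendsto (fun x : ℝ => w x / x ^ (-(d : ℝ) - δ)) atTop (nhds 0))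
    (lam : ℝ) (hlam : 1 < lam)
    (hm : ∀ j' j : Fin d → ℤ,
      ‖m j' j‖ ≤ w ‖fun i => lam * (j' i : ℝ) - (j i : ℝ)‖) :
    ¬ ∃ L : lp (fun _ : Fin d → ℤ => ℂ) 2 →L[ℂ] lp (fun _ : Fin d → ℤ => ℂ) 2,
      L.comp M = ContinuousLinearMap.id ℂ (lp (fun _ : Fin d → ℤ => ℂ) 2) :=
  no_bounded_left_inverse_of_slanted_matrix_decay_general d hd δ hδ m M hM w hmono hw lam hlam hm
end
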